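/- arXiv:2205.04311 — 7 statements merged into one kernel-verified Lean document; each statement's English description precedes it below -/
import Mathlib

section
/- Let b = 0.8 and ε = 0.1, and for I ∈ ℝ let u*(I) be the unique root of f(u) − (1 + 1/b)u + I = 0. There exists I* ∈ (1, 2) such that: for every I ∈ (1, 2) the Jacobian J(u*(I)) has one real negative eigenvalue and a pair of complex-conjugate non-real eigenvalues; for I ∈ (1, I*) the complex-conjugate pair has positive real part (the fixed point is unstable); and for I ∈ (I*, 2) all three eigenvalues have negative real part (the fixed point is stable). -/
/-- The cubic nonlinearity of the FitzHugh–Nagumo model: `f(u) = -(1/3)u³ + u`. -/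
noncomputable def fFHN (u : ℝ) : ℝ := -(1/3) * u^3 + u

lemma aux_g_mono : StrictMono (fun u : ℝ => u^3/3 + 5/4*u) := by
  intro a b hab
  simp only
  nlinarith [sq_nonneg (a+b), sq_nonneg a, sq_nonneg b]

lemma aux_delta_neg (t : ℝ) (ht1 : 0.49 < t) (ht2 : t < 1.3924) :
    18*(10*t-91/10)*(9*t+52/25)*((4/5)*t+1) - 4*(10*t-91/10)^3*((4/5)*t+1)
      + (10*t-91/10)^2*(9*t+52/25)^2 - 4*(9*t+52/25)^3 - 27*((4/5)*t+1)^2 < 0 := by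
  nlinarith [mul_pos (sub_pos.mpr ht1) (sub_pos.mpr ht2), sq_nonneg (t-1), sq_nonneg (t-0.9),
    mul_pos (mul_pos (sub_pos.mpr ht1) (sub_pos.mpr ht2)) (sub_pos.mpr ht1),
    mul_pos (mul_pos (sub_pos.mpr ht1) (sub_pos.mpr ht2)) (sub_pos.mpr ht2)]

lemma aux_root (t : ℝ) (ht1 : 0.49 < t) (ht2 : t < 1.3924) :
    ∃ r : ℝ, r < 0 ∧ r^3 + (10*t-91/10)*r^2 + (9*t+52/25)*r + ((4/5)*t+1) = 0 := by
  have hcont : ContinuousOn (fun x : ℝ => x^3 + (10*t-91/10)*x^2 + (9*t+52/25)*x + ((4/5)*t+1))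
      (Set.Icc (-10) 0) := by fun_prop
  have h10 : (-10:ℝ) ≤ 0 := by norm_num
  have hmem : (0:ℝ) ∈ Set.Icc ((fun x : ℝ => x^3 + (10*t-91/10)*x^2 + (9*t+52/25)*x + ((4/5)*t+1)) (-10))
      ((fun x : ℝ => x^3 + (10*t-91/10)*x^2 + (9*t+52/25)*x + ((4/5)*t+1)) 0) := by
    constructor <;> simp only <;> nlinarith
  obtain ⟨r, hrI, hr⟩ := intermediate_value_Icc h10 hcont hmem
  refine ⟨r, ?_, hr⟩
  rcases lt_or_ge r 0 with h | h
  · exact h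
  · exfalso
    have : r^3 + (10*t-91/10)*r^2 + (9*t+52/25)*r + ((4/5)*t+1) > 0 := by
      nlinarith [mul_nonneg h (sq_nonneg (r - 2.1)), mul_nonneg (mul_nonneg h h) (sub_pos.mpr ht1).le,
        mul_nonneg h (sub_pos.mpr ht1).le]
    linarith [hr ▸ this]

lemma aux_det (a r s p0 : ℝ) (lam : ℂ)
    (h1 : s - r = 10*a^2 - 91/10) (h2 : p0 - r*s = 9*a^2 + 52/25) (h3 : -(r*p0) = (4/5)*a^2 + 1) :
    ((!![(((1 - a^2)/(0.1:ℝ) : ℝ) : ℂ), ((-1/(0.1:ℝ) : ℝ) : ℂ), ((1/(0.1:ℝ) : ℝ) : ℂ);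
         1, ((-0.8 : ℝ) : ℂ), 0;
         ((-0.1 : ℝ) : ℂ), 0, ((-0.1 : ℝ) : ℂ)] : Matrix (Fin 3) (Fin 3) ℂ)
      - lam • 1).det = -((lam - (r:ℂ)) * (lam^2 + (s:ℝ)*lam + (p0:ℝ))) := by
  have e1 : ((0.1:ℝ):ℂ) = 1/10 := by norm_num
  have e2 : ((-0.8:ℝ):ℂ) = -(4/5) := by norm_num
  have e3 : ((-0.1:ℝ):ℂ) = -(1/10) := by norm_num
  have h1' := congrArg (Complex.ofReal) h1; push_cast at h1'
  have h2' := congrArg (Complex.ofReal) h2; push_cast at h2'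
  have h3' := congrArg (Complex.ofReal) h3; push_cast at h3'
  simp [Matrix.det_fin_three, Matrix.one_apply, e1, e2, e3]
  linear_combination lam^2 * h1' + lam * h2' + h3'

lemma aux_quad_fact (s p0 w : ℝ) (hw2 : 4*w^2 = 4*p0 - s^2) (lam : ℂ) :
    lam^2 + (s:ℝ)*lam + (p0:ℝ)
      = (lam - ((↑(-s/2) : ℂ) + ↑w * Complex.I)) * (lam - ((↑(-s/2) : ℂ) - ↑w * Complex.I)) := by
  have hw2' := congrArg (Complex.ofReal) hw2; push_cast at hw2'
  push_cast
  linear_combination (w:ℂ)^2 * Complex.I_sq - (1/4 : ℂ) * hw2'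


set_option maxHeartbeats 1000000

lemma aux_Kpos (r s p0 : ℝ) (hD : s^2 - 4*p0 < 0) : 0 < p0 + r^2 - r*s := by
  nlinarith [sq_nonneg (r - s/2)]

lemma aux_sq_lt (u v : ℝ) (hu : 0 ≤ u) (h : u < v) : u^2 < v^2 := by nlinarith

lemma aux_sign_lt (t tstar : ℝ) (ht1 : 0.49 < t) (hts1 : 0.926 < tstar)
    (htseq : 90*tstar^2 - (619/10)*tstar - 2491/125 = 0) (htlt : t < tstar) :
    (10*t-91/10)*(9*t+52/25) - ((4/5)*t+1) < 0 := by
  nlinarith [mul_pos (sub_pos.mpr htlt) (show (0:ℝ) < 90*(t+tstar) - 619/10 by linarith), htseq]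

lemma aux_sign_gt (t tstar : ℝ) (hts1 : 0.926 < tstar)
    (htseq : 90*tstar^2 - (619/10)*tstar - 2491/125 = 0) (htgt : tstar < t) :
    0 < (10*t-91/10)*(9*t+52/25) - ((4/5)*t+1) := by
  nlinarith [mul_pos (sub_pos.mpr htgt) (show (0:ℝ) < 90*(t+tstar) - 619/10 by linarith), htseq]

/-- Let `b = 0.8`, `ε = 0.1`, and for each `I` let `u*(I)` be the unique root of
`f(u) - (1 + 1/b)u + I = 0`.  There exists `I* ∈ (1, 2)` such that for every
`I ∈ (1, 2)` the Jacobian `J(u*(I))` has one real negative eigenvalue `r` and a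
pair of non-real complex-conjugate eigenvalues `μ, μ̄`; for `I < I*` the
conjugate pair has positive real part, and for `I > I*` all three eigenvalues
have negative real part. -/
theorem stmt_6 (ustar : ℝ → ℝ)
    (hustar : ∀ I : ℝ, fFHN (ustar I) - (1 + 1/(0.8:ℝ)) * ustar I + I = 0) :
    ∃ Istar ∈ Set.Ioo (1:ℝ) 2,
      ∀ I ∈ Set.Ioo (1:ℝ) 2,
        ∃ (r : ℝ) (μ : ℂ),
          r < 0 ∧ μ.im ≠ 0 ∧
          (∀ lam : ℂ,
            ((!![(((1 - (ustar I)^2)/(0.1:ℝ) : ℝ) : ℂ), ((-1/(0.1:ℝ) : ℝ) : ℂ), ((1/(0.1:ℝ) : ℝ) : ℂ);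
                 1, ((-0.8 : ℝ) : ℂ), 0;
                 ((-0.1 : ℝ) : ℂ), 0, ((-0.1 : ℝ) : ℂ)] : Matrix (Fin 3) (Fin 3) ℂ)
              - lam • 1).det = 0 ↔
            (lam = (r : ℂ) ∨ lam = μ ∨ lam = (starRingEnd ℂ) μ)) ∧
          (I < Istar → 0 < μ.re) ∧ (Istar < I → μ.re < 0) := by
  -- the critical parameter value
  have hRsq : (Real.sqrt 11005.69)^2 = 11005.69 := Real.sq_sqrt (by norm_num)
  set R : ℝ := Real.sqrt 11005.69 with hR
  have hRnn : 0 ≤ R := Real.sqrt_nonneg _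
  have hRlo : 104.9 < R := by nlinarith
  have hRhi : R < 104.91 := by nlinarith
  obtain ⟨tstar, htstar⟩ : ∃ x : ℝ, x = (61.9 + R)/180 := ⟨_, rfl⟩
  have hts1 : 0.926 < tstar := by rw [htstar]; linarith
  have hts2 : tstar < 0.927 := by rw [htstar]; linarith
  have htsnn : (0:ℝ) ≤ tstar := by linarith
  have hucsq : (Real.sqrt tstar)^2 = tstar := Real.sq_sqrt htsnn
  set uc : ℝ := Real.sqrt tstar with huc
  have hucnn : 0 ≤ uc := Real.sqrt_nonneg _
  have huc1 : 0.96 < uc := by nlinarith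
  have huc2 : uc < 0.97 := by nlinarith
  have htseq : 90*tstar^2 - (619/10)*tstar - 2491/125 = 0 := by
    rw [htstar]; linear_combination (1/360 : ℝ) * hRsq
  have huc3lo : (0.884:ℝ) < uc^3 := by
    nlinarith [mul_pos (sub_pos.mpr huc1) (show (0:ℝ) < uc^2 + 0.96*uc + 0.9216 by nlinarith [sq_nonneg (uc + 0.48)])]
  have huc3hi : uc^3 < (0.913:ℝ) := by
    nlinarith [mul_pos (sub_pos.mpr huc2) (show (0:ℝ) < uc^2 + 0.97*uc + 0.9409 by nlinarith [sq_nonneg (uc + 0.485)])]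
  refine ⟨uc^3/3 + 5/4*uc, ⟨by nlinarith, by nlinarith⟩, ?_⟩
  rintro I ⟨hIl, hIr⟩
  set u : ℝ := ustar I with hu
  have hg : u^3/3 + 5/4*u = I := by
    have h := hustar I
    rw [fFHN] at h
    rw [← hu] at h
    norm_num at h ⊢
    linarith
  -- bounds on u
  have hu1 : 0.7 < u := by
    by_contra h
    push_neg at h
    nlinarith [mul_nonneg (by linarith : (0:ℝ) ≤ 0.7 - u)
      (by nlinarith [sq_nonneg (u+0.35)] : (0:ℝ) ≤ u^2 + 0.7*u + 0.49)]
  have hu2 : u < 1.18 := by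
    by_contra h
    push_neg at h
    nlinarith [mul_nonneg (by linarith : (0:ℝ) ≤ u - 1.18)
      (by nlinarith [sq_nonneg (u+0.59)] : (0:ℝ) ≤ u^2 + 1.18*u + 1.3924)]
  obtain ⟨t, ht⟩ : ∃ x : ℝ, x = u^2 := ⟨_, rfl⟩
  have ht1 : 0.49 < t := by rw [ht]; nlinarith
  have ht2 : t < 1.3924 := by rw [ht]; nlinarith
  obtain ⟨r, hr0, hPr⟩ := aux_root t ht1 ht2
  obtain ⟨s, hs⟩ : ∃ x : ℝ, x = 10*t - 91/10 + r := ⟨_, rfl⟩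
  obtain ⟨p0, hp0⟩ : ∃ x : ℝ, x = 9*t + 52/25 + r*s := ⟨_, rfl⟩
  have hc1 : s - r = 10*u^2 - 91/10 := by rw [hs, ← ht]; ring
  have hc2 : p0 - r*s = 9*u^2 + 52/25 := by rw [hp0, ← ht]; ring
  have hc3t : -(r*p0) = (4/5)*t + 1 := by
    rw [hp0, hs]; linear_combination (-1 : ℝ) * hPr
  have hc3 : -(r*p0) = (4/5)*u^2 + 1 := by rw [hc3t, ht]
  have hkey : 18*(10*t-91/10)*(9*t+52/25)*((4/5)*t+1) - 4*(10*t-91/10)^3*((4/5)*t+1)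
      + (10*t-91/10)^2*(9*t+52/25)^2 - 4*(9*t+52/25)^3 - 27*((4/5)*t+1)^2
      = (3*r^2 + 2*(10*t-91/10)*r + (9*t+52/25))^2 * (s^2 - 4*p0) := by
    rw [hp0, hs]
    linear_combination (27*r^3 + (270*t - 2457/10)*r^2 + (243*t + 1404/25)*r
      + (-4000*t^3 + 12540*t^2 - (55293/5)*t + 132329/50)) * hPr
  have hD : s^2 - 4*p0 < 0 := by
    by_contra hcon
    push_neg at hcon
    linarith [aux_delta_neg t ht1 ht2, hkey,
      mul_nonneg (sq_nonneg (3*r^2 + 2*(10*t-91/10)*r + (9*t+52/25))) hcon]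
  obtain ⟨w, hwdef⟩ : ∃ x : ℝ, x = Real.sqrt (4*p0 - s^2) / 2 := ⟨_, rfl⟩
  have hwpos : 0 < w := by
    rw [hwdef]
    exact div_pos (Real.sqrt_pos.mpr (by linarith)) two_pos
  have hw2 : 4*w^2 = 4*p0 - s^2 := by
    rw [hwdef, div_pow, Real.sq_sqrt (by linarith : (0:ℝ) ≤ 4*p0 - s^2)]
    ring
  refine ⟨r, (↑(-s/2) : ℂ) + ↑w * Complex.I, hr0, ?_, ?_, ?_, ?_⟩
  · simp [hwpos.ne']
  · intro lam
    have hconj : (starRingEnd ℂ) ((↑(-s/2) : ℂ) + ↑w * Complex.I)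
        = (↑(-s/2) : ℂ) - ↑w * Complex.I := by
      rw [map_add, map_mul, Complex.conj_ofReal, Complex.conj_ofReal, Complex.conj_I]
      ring
    rw [aux_det u r s p0 lam hc1 hc2 hc3, aux_quad_fact s p0 w hw2 lam, hconj,
      neg_eq_zero, mul_eq_zero, mul_eq_zero, sub_eq_zero, sub_eq_zero, sub_eq_zero]
  · intro hIlt
    have hulou : u < uc := by
      have h2 : (fun x : ℝ => x^3/3 + 5/4*x) u < (fun x : ℝ => x^3/3 + 5/4*x) uc := by
        simp only
        linarith [hg]
      exact aux_g_mono.lt_iff_lt.mp h2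
    have httlt : t < tstar := by
      rw [ht, ← hucsq]
      exact aux_sq_lt u uc (by linarith) hulou
    have hh := aux_sign_lt t tstar ht1 hts1 htseq httlt
    have hKpos : 0 < p0 + r^2 - r*s := aux_Kpos r s p0 hD
    have hhK : (10*t-91/10)*(9*t+52/25) - ((4/5)*t+1) = s * (p0 + r^2 - r*s) := by
      rw [hp0, hs]
      linear_combination (-1 : ℝ) * hPr
    have hsneg : s < 0 := by
      by_contra hcon
      push_neg at hcon
      linarith [mul_nonneg hcon hKpos.le, hhK]
    have hre : ((↑(-s/2) : ℂ) + ↑w * Complex.I).re = -s/2 := by simp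
    rw [hre]
    linarith
  · intro hIgt
    have hulou : uc < u := by
      have h2 : (fun x : ℝ => x^3/3 + 5/4*x) uc < (fun x : ℝ => x^3/3 + 5/4*x) u := by
        simp only
        linarith [hg]
      exact aux_g_mono.lt_iff_lt.mp h2
    have httgt : tstar < t := by
      rw [ht, ← hucsq]
      exact aux_sq_lt uc u hucnn hulou
    have hh := aux_sign_gt t tstar hts1 htseq httgt
    have hKpos : 0 < p0 + r^2 - r*s := aux_Kpos r s p0 hD
    have hhK : (10*t-91/10)*(9*t+52/25) - ((4/5)*t+1) = s * (p0 + r^2 - r*s) := by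
      rw [hp0, hs]
      linear_combination (-1 : ℝ) * hPr
    have hspos : 0 < s := by
      by_contra hcon
      push_neg at hcon
      linarith [mul_nonneg (neg_nonneg.mpr hcon) hKpos.le, hhK]
    have hre : ((↑(-s/2) : ℂ) + ↑w * Complex.I).re = -s/2 := by simp
    rw [hre]
    linarith
end

section
/- Let 0 < ε < 1, b > 0 and I ∈ ℝ. There exist constants K₁ > 0 and K₂ > 0 such that for all (u, v, w) ∈ ℝ³: 2(−u⁴/3 + u² + (1 − ε)uw + Iu − b v² − ε w²) ≤ −K₁(ε u² + v² + w²) + K₂. -/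
/-- For `0 < ε < 1`, `b > 0`, `I ∈ ℝ`, there exist constants `K₁, K₂ > 0` such that
for all `(u, v, w) ∈ ℝ³`:
`2(-u⁴/3 + u² + (1 - ε)uw + Iu - b v² - ε w²) ≤ -K₁(ε u² + v² + w²) + K₂`. -/
theorem stmt_7 (ε b I : ℝ) (hε0 : 0 < ε) (hε1 : ε < 1) (hb : 0 < b) :
    ∃ K₁ > (0:ℝ), ∃ K₂ > (0:ℝ), ∀ u v w : ℝ,
      2 * (-u^4/3 + u^2 + (1 - ε)*u*w + I*u - b*v^2 - ε*w^2) ≤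
        -K₁ * (ε*u^2 + v^2 + w^2) + K₂ := by
  set A : ℝ := (1 - ε)^2 / ε with hAdef
  have hA0 : 0 ≤ A := by positivity
  have hAε : A * ε = (1 - ε)^2 := div_mul_cancel₀ _ (ne_of_gt hε0)
  refine ⟨min ε b, lt_min hε0 hb, (3/4)*(3+A)^2 + 3/4 + I^2 + 1, by positivity, ?_⟩
  intro u v w
  have hK1ε : min ε b ≤ ε := min_le_left _ _
  have hK1b : min ε b ≤ b := min_le_right _ _
  have hK10 : 0 < min ε b := lt_min hε0 hb
  have h1 : 2*(1-ε)*u*w ≤ ε*w^2 + A*u^2 := by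
    have hs := sq_nonneg (ε*w - (1-ε)*u)
    nlinarith [mul_pos hε0 hε0, sq_nonneg w, sq_nonneg u, mul_nonneg hA0 (sq_nonneg u)]
  have h2 : -2*u^4/3 + (3+A)*u^2 + 2*I*u ≤ (3/4)*(3+A)^2 + 3/4 + I^2 := by
    nlinarith [sq_nonneg (u^2 - (3/2)*(3+A)), sq_nonneg (u - I), sq_nonneg (u^2 - 3/2), hA0]
  nlinarith [sq_nonneg u, sq_nonneg v, sq_nonneg w,
    mul_le_mul_of_nonneg_right hK1b (sq_nonneg v),
    mul_le_mul_of_nonneg_right hK1ε (sq_nonneg w),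
    mul_le_mul_of_nonneg_right (mul_le_mul hK1ε hε1.le hε0.le hε0.le) (sq_nonneg u),
    h1, h2, hK10.le]
end

section
/- For every k > 0, the level set {(u, v) ∈ ℝ² : (−3u² − v + 1/6)·exp(6v) = k} is a compact subset of ℝ². -/
/-!
On the superlevel set `{G ≥ k}`, `k > 0`, the factor `-3u² - v + 1/6` is positive, so
`3u² < 1/6 - v`. Dropping the `-3u²` term bounds `G` by `(1/6 - v) e^{6v}`, which tends to `0`
as `v → -∞`; hence `v` is bounded below there as well, and `{G ≥ k}` is compact. The level set
`{G = k}` is a closed subset of it.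
-/

open Real Filter Topology Set

lemma tendsto_sub_mul_exp_mul_atBot (c : ℝ) {a : ℝ} (ha : 0 < a) :
    Tendsto (fun v => (c - v) * exp (a * v)) atBot (𝓝 0) := by
  have hlin : Tendsto (fun v => -(a * v)) atBot atTop :=
    tendsto_neg_atBot_atTop.comp (tendsto_id.const_mul_atBot ha)
  have hexp : Tendsto (fun v => exp (a * v)) atBot (𝓝 0) :=
    tendsto_exp_atBot.comp (tendsto_id.const_mul_atBot ha)
  have hmul : Tendsto (fun v => v * exp (a * v)) atBot (𝓝 0) := by
    have := ((tendsto_pow_mul_exp_neg_atTop_nhds_zero 1).comp hlin).const_mul (-a⁻¹)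
    rw [mul_zero] at this
    refine this.congr fun v => ?_
    simp only [Function.comp_apply, pow_one, neg_neg]
    field_simp
  simpa [sub_mul] using (hexp.const_mul c).sub hmul

noncomputable def firstIntegral (p : ℝ × ℝ) : ℝ :=
  (-3 * p.1 ^ 2 - p.2 + 1 / 6) * exp (6 * p.2)

@[fun_prop]
lemma continuous_firstIntegral : Continuous firstIntegral := by
  unfold firstIntegral; fun_prop

lemma firstIntegral_le (p : ℝ × ℝ) : firstIntegral p ≤ (1 / 6 - p.2) * exp (6 * p.2) := by
  unfold firstIntegral
  gcongr
  nlinarith [sq_nonneg p.1]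

lemma isCompact_superlevel_firstIntegral {k : ℝ} (hk : 0 < k) :
    IsCompact {p | k ≤ firstIntegral p} := by
  obtain ⟨m, hm⟩ := eventually_atBot.mp
    ((tendsto_sub_mul_exp_mul_atBot (1 / 6) (by norm_num : (0 : ℝ) < 6)).eventually_lt_const hk)
  refine ((isCompact_Icc (a := -√(1 / 6 - m)) (b := √(1 / 6 - m))).prod
    (isCompact_Icc (a := m) (b := 1 / 6))).of_isClosed_subset
    (isClosed_le continuous_const continuous_firstIntegral) ?_
  rintro ⟨u, v⟩ (hp : k ≤ firstIntegral (u, v))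
  have hm_le : m ≤ v := by
    by_contra! hv
    exact (hp.trans (firstIntegral_le _)).not_gt (hm v hv.le)
  have hpos : 0 < -3 * u ^ 2 - v + 1 / 6 :=
    (mul_pos_iff_of_pos_right (exp_pos _)).mp (hk.trans_le hp)
  have hu : |u| ≤ √(1 / 6 - m) := abs_le_sqrt (by nlinarith)
  exact ⟨abs_le.mp hu, hm_le, by nlinarith⟩

/-- For every `k > 0`, the level set `{(u, v) : (-3u² - v + 1/6)·exp(6v) = k}` of the
first integral `G` of the planar system `u' = -3u² - v`, `v' = u` is compact. -/
theorem stmt_11 (k : ℝ) (hk : 0 < k) :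
    IsCompact {p : ℝ × ℝ | (-3*p.1^2 - p.2 + 1/6) * Real.exp (6*p.2) = k} :=
  (isCompact_superlevel_firstIntegral hk).of_isClosed_subset
    (isClosed_eq continuous_firstIntegral continuous_const) fun _ hp => hp.ge
end

section
/- For every c ≥ 1/6, if (u, v) : [0, t*) → ℝ² is a solution of the planar system u' = −3u² − v, v' = u with (u(0), v(0)) = (0, c), defined on its maximal interval of existence [0, t*) (t* ≤ +∞, i.e. the solution admits no extension to a solution on a strictly larger interval), then u(t) → −∞ and v(t) → −∞ as t → t*. -/
/-!
The function `G(u, v) = (-3u² - v + 1/6) e^{6v}` is a first integral, and `G(0, c) ≤ 0` for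
`c ≥ 1/6`; since `e^{6v} > 0`, this gives `u' = -3u² - v ≤ -1/6` along the solution. Hence
`u(t) ≤ -t/6`, both `u` and `v` are decreasing, and `v ≥ 1/6 - 3u²`. Conservation of `G` also
bounds `u²` in terms of a lower bound of `v`, so `u` and `v` are unbounded below together, and
for monotone functions unboundedness below means divergence to `-∞` at `t*`. If `t* = ∞`, the
bound `u(t) ≤ -t/6` does it. If `t*` is finite and `u` were bounded below, then so would be `v`;
both would have limits at `t*`, and adding these limits as values at `t*` would extend the
solution to `[0, t*]`, contradicting maximality.
-/

open Set Filter Topology Real Function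

noncomputable def layerIntegral (x y : ℝ) : ℝ := (-3 * x ^ 2 - y + 1 / 6) * exp (6 * y)

lemma layerIntegral_nonpos_iff {x y : ℝ} :
    layerIntegral x y ≤ 0 ↔ -3 * x ^ 2 - y + 1 / 6 ≤ 0 := by
  simpa only [layerIntegral, zero_mul] using mul_le_mul_iff_of_pos_right (c := 0) (exp_pos (6 * y))

lemma layerIntegral_zero_nonpos {c : ℝ} (hc : 1 / 6 ≤ c) : layerIntegral 0 c ≤ 0 :=
  layerIntegral_nonpos_iff.2 (by linarith)

lemma three_mul_sq_le_of_layerIntegral_eq {x y K M : ℝ} (hK : K ≤ 0)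
    (h : layerIntegral x y = K) (hM : M ≤ y) :
    3 * x ^ 2 ≤ 1 / 6 - M - K * exp (-(6 * M)) := by
  have hx : 3 * x ^ 2 = 1 / 6 - y - K * exp (-(6 * y)) := by
    rw [← h, layerIntegral, mul_assoc, ← exp_add]
    simp only [add_neg_cancel, exp_zero]
    ring
  have hexp : exp (-(6 * y)) ≤ exp (-(6 * M)) := exp_le_exp.2 (by linarith)
  nlinarith

lemma HasDerivWithinAt.layerIntegral {u v : ℝ → ℝ} {S : Set ℝ} {t : ℝ}
    (hu : HasDerivWithinAt u (-3 * u t ^ 2 - v t) S t) (hv : HasDerivWithinAt v (u t) S t) :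
    HasDerivWithinAt (fun t => layerIntegral (u t) (v t)) 0 S t := by
  have h := ((((hu.fun_pow 2).const_mul (-3)).fun_sub hv).add_const (1 / 6)).fun_mul
    (hv.const_mul 6).exp
  exact h.congr_deriv (by push_cast; ring)

lemma Convex.antitoneOn_of_hasDerivWithinAt_nonpos {S : Set ℝ} {f f' : ℝ → ℝ} (hS : Convex ℝ S)
    (hf : ∀ t ∈ S, HasDerivWithinAt f (f' t) S t) (hf' : ∀ t ∈ S, f' t ≤ 0) :
    AntitoneOn f S :=
  _root_.antitoneOn_of_hasDerivWithinAt_nonpos hS (fun t ht => (hf t ht).continuousWithinAt)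
    (fun t ht => (hf t (interior_subset ht)).mono interior_subset)
    (fun t ht => hf' t (interior_subset ht))

lemma hasDerivWithinAt_update_Icc {x x' : ℝ → ℝ} {a b L L' : ℝ} (hab : a < b)
    (hx : ∀ t ∈ Ico a b, HasDerivWithinAt x (x' t) (Ico a b) t)
    (hL : Tendsto x (𝓝[<] b) (𝓝 L)) (hL' : Tendsto x' (𝓝[<] b) (𝓝 L')) {t : ℝ}
    (ht : t ∈ Icc a b) : HasDerivWithinAt (update x b L) (update x' b L' t) (Icc a b) t := by
  have hIoo : ∀ s ∈ Ioo a b, HasDerivAt (update x b L) (x' s) s := fun s hs =>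
    ((hx s (Ioo_subset_Ico_self hs)).hasDerivAt
      (mem_of_superset (isOpen_Ioo.mem_nhds hs) Ioo_subset_Ico_self)).congr_of_eventuallyEq
      (by filter_upwards [Iio_mem_nhds hs.2] with r hr using update_of_ne hr.ne _ _)
  have hIoo_mem : Ioo a b ∈ 𝓝[<] b := Ioo_mem_nhdsLT hab
  rcases ht.2.eq_or_lt with rfl | htb
  · rw [update_self]
    refine (hasDerivWithinAt_Iic_of_tendsto_deriv (s := Ioo a t)
      (fun s hs => (hIoo s hs).differentiableAt.differentiableWithinAt) ?_ hIoo_mem ?_).mono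
      Icc_subset_Iic_self
    · rw [continuousWithinAt_update_same]
      exact hL.mono_left (nhdsWithin_mono _ fun s hs => hs.1.2)
    · exact hL'.congr' (by filter_upwards [hIoo_mem] with s hs using (hIoo s hs).deriv.symm)
  · rw [update_of_ne htb.ne]
    have hmem : Ico a b ∈ 𝓝[Icc a b] t := by
      filter_upwards [mem_nhdsWithin_of_mem_nhds (Iio_mem_nhds htb), self_mem_nhdsWithin]
        with s hs hs' using ⟨hs'.1, hs⟩
    exact ((hx t ⟨ht.1, htb⟩).mono_of_mem_nhdsWithin hmem).congr_of_eventuallyEq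
      (by filter_upwards [hmem] with s hs using update_of_ne hs.2.ne _ _)
      (update_of_ne htb.ne _ _)

lemma convex_setOf_le_coe_lt (a : ℝ) (τ : EReal) :
    Convex ℝ {t : ℝ | a ≤ t ∧ (t : EReal) < τ} :=
  OrdConnected.convex <| ordConnected_iff.2 fun _ hx _ hy _ _ hz =>
    ⟨hx.1.trans hz.1, (EReal.coe_le_coe_iff.2 hz.2).trans_lt hy.2⟩

lemma AntitoneOn.tendsto_atBot_comap_coe {f : ℝ → ℝ} {a : ℝ} {τ : EReal}
    (hf : AntitoneOn f {t : ℝ | a ≤ t ∧ (t : EReal) < τ})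
    (hb : ¬ BddBelow (f '' {t : ℝ | a ≤ t ∧ (t : EReal) < τ})) :
    Tendsto f (comap (fun t : ℝ => (t : EReal)) (𝓝[<] τ)) atBot := by
  refine tendsto_atBot.2 fun b => ?_
  obtain ⟨_, ⟨t₀, ht₀, rfl⟩, hlt⟩ := not_bddBelow_iff.1 hb b
  filter_upwards [preimage_mem_comap (Ioo_mem_nhdsLT ht₀.2)] with t ht
  have ht₀t : t₀ ≤ t := EReal.coe_le_coe_iff.1 ht.1.le
  exact (hf ht₀ ⟨ht₀.1.trans ht₀t, ht.2⟩ ht₀t).trans hlt.le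

def IsLayerSolution (S : Set ℝ) (u v : ℝ → ℝ) : Prop :=
  ∀ t ∈ S, HasDerivWithinAt u (-3 * u t ^ 2 - v t) S t ∧ HasDerivWithinAt v (u t) S t

namespace IsLayerSolution

variable {S : Set ℝ} {u v : ℝ → ℝ} {a b : ℝ}

lemma layerIntegral_eq (h : IsLayerSolution S u v) (hS : Convex ℝ S) {s t : ℝ}
    (hs : s ∈ S) (ht : t ∈ S) : layerIntegral (u t) (v t) = layerIntegral (u s) (v s) := by
  have hconst := hS.norm_image_sub_le_of_norm_hasDerivWithin_le (C := 0)
    (fun r hr => (h r hr).1.layerIntegral (h r hr).2) (fun _ _ => norm_zero.le) hs ht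
  rwa [zero_mul, norm_le_zero_iff, sub_eq_zero] at hconst

lemma antitoneOn_add_div_six (h : IsLayerSolution S u v) (hS : Convex ℝ S)
    (hG : ∀ t ∈ S, layerIntegral (u t) (v t) ≤ 0) : AntitoneOn (fun t => u t + t / 6) S :=
  hS.antitoneOn_of_hasDerivWithinAt_nonpos
    (fun t ht => (h t ht).1.add ((hasDerivWithinAt_id t S).div_const 6))
    (fun t ht => by have := layerIntegral_nonpos_iff.1 (hG t ht); linarith)

lemma le_neg_div_six (h : IsLayerSolution S u v) (hS : Convex ℝ S)
    (hG : ∀ t ∈ S, layerIntegral (u t) (v t) ≤ 0) (h0 : 0 ∈ S) (hu0 : u 0 = 0) {t : ℝ}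
    (ht : t ∈ S) (ht0 : 0 ≤ t) : u t ≤ -(t / 6) := by
  have := h.antitoneOn_add_div_six hS hG h0 ht ht0
  simp only [hu0] at this
  linarith

lemma antitoneOn_u (h : IsLayerSolution S u v) (hS : Convex ℝ S)
    (hG : ∀ t ∈ S, layerIntegral (u t) (v t) ≤ 0) : AntitoneOn u S :=
  hS.antitoneOn_of_hasDerivWithinAt_nonpos (fun t ht => (h t ht).1)
    (fun t ht => by have := layerIntegral_nonpos_iff.1 (hG t ht); linarith)

lemma antitoneOn_v (h : IsLayerSolution S u v) (hS : Convex ℝ S) (hu : ∀ t ∈ S, u t ≤ 0) :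
    AntitoneOn v S :=
  hS.antitoneOn_of_hasDerivWithinAt_nonpos (fun t ht => (h t ht).2) hu

lemma update_Icc (h : IsLayerSolution (Ico a b) u v) (hab : a < b) {Lu Lv : ℝ}
    (hu : Tendsto u (𝓝[<] b) (𝓝 Lu)) (hv : Tendsto v (𝓝[<] b) (𝓝 Lv)) :
    IsLayerSolution (Icc a b) (update u b Lu) (update v b Lv) := by
  intro t ht
  have hU := hasDerivWithinAt_update_Icc hab (fun t ht => (h t ht).1) hu
    (((hu.pow 2).const_mul (-3)).sub hv) ht
  have hV := hasDerivWithinAt_update_Icc hab (fun t ht => (h t ht).2) hv hu ht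
  rcases eq_or_ne t b with rfl | htb
  · simpa only [update_self] using And.intro hU hV
  · simpa only [update_of_ne htb] using And.intro hU hV

lemma exists_extension_Icc (h : IsLayerSolution (Ico a b) u v) (hab : a < b)
    (hu : AntitoneOn u (Ico a b)) (hv : AntitoneOn v (Ico a b))
    (hu_bdd : BddBelow (u '' Ico a b)) (hv_bdd : BddBelow (v '' Ico a b)) :
    ∃ U V, IsLayerSolution (Icc a b) U V ∧ EqOn U u (Ico a b) ∧ EqOn V v (Ico a b) := by
  have hne : (Ioo a b).Nonempty := nonempty_Ioo.2 hab
  have hlim {f : ℝ → ℝ} (hf : AntitoneOn f (Ico a b)) (hbdd : BddBelow (f '' Ico a b)) :=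
    (hf.mono Ioo_subset_Ico_self).tendsto_nhdsWithin_Ioo_left hne
      (hbdd.mono (image_mono Ioo_subset_Ico_self))
  exact ⟨_, _, h.update_Icc hab (hlim hu hu_bdd) (hlim hv hv_bdd),
    fun t ht => update_of_ne ht.2.ne _ _, fun t ht => update_of_ne ht.2.ne _ _⟩

end IsLayerSolution

lemma bddBelow_u_of_layerIntegral_eq {S : Set ℝ} {u v : ℝ → ℝ} {K : ℝ} (hK : K ≤ 0)
    (hG : ∀ t ∈ S, layerIntegral (u t) (v t) = K) (hv : BddBelow (v '' S)) :
    BddBelow (u '' S) := by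
  obtain ⟨M, hM⟩ := hv
  refine ⟨-√((1 / 6 - M - K * exp (-(6 * M))) / 3), ?_⟩
  rintro _ ⟨t, ht, rfl⟩
  have hsq := three_mul_sq_le_of_layerIntegral_eq hK (hG t ht) (hM ⟨t, ht, rfl⟩)
  exact neg_le_of_abs_le (abs_le_sqrt (by linarith))

lemma bddBelow_v_of_layerIntegral_nonpos {S : Set ℝ} {u v : ℝ → ℝ}
    (hG : ∀ t ∈ S, layerIntegral (u t) (v t) ≤ 0) (hu_nonpos : ∀ t ∈ S, u t ≤ 0)
    (hu : BddBelow (u '' S)) : BddBelow (v '' S) := by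
  obtain ⟨M, hM⟩ := hu
  refine ⟨1 / 6 - 3 * M ^ 2, ?_⟩
  rintro _ ⟨t, ht, rfl⟩
  have h1 := layerIntegral_nonpos_iff.1 (hG t ht)
  have h2 := hM ⟨t, ht, rfl⟩
  have h3 := hu_nonpos t ht
  nlinarith

/-- For every `c ≥ 1/6`, if `(u, v)` is a solution of the planar system
`u' = -3u² - v`, `v' = u` with `(u(0), v(0)) = (0, c)`, defined on its maximal
interval of existence `[0, t*)` (with `t* ≤ +∞`, i.e. the solution admits no
extension to a solution on a strictly larger interval), then `u(t) → -∞` and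
`v(t) → -∞` as `t → t*`.  Here the maximal interval is encoded as
`S = {t : ℝ | 0 ≤ t ∧ (t : EReal) < t*}`, and the limit `t → t*` as the filter
on `ℝ` obtained by pulling back the left-neighbourhood filter of `t*` in `EReal`
(which is `atTop` when `t* = ⊤`). -/
theorem stmt_13 (c : ℝ) (hc : 1/6 ≤ c) (tstar : EReal) (htpos : 0 < tstar)
    (u v : ℝ → ℝ)
    (hu : ∀ t ∈ {t : ℝ | 0 ≤ t ∧ (t : EReal) < tstar},
      HasDerivWithinAt u (-3*(u t)^2 - v t) {t : ℝ | 0 ≤ t ∧ (t : EReal) < tstar} t)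
    (hv : ∀ t ∈ {t : ℝ | 0 ≤ t ∧ (t : EReal) < tstar},
      HasDerivWithinAt v (u t) {t : ℝ | 0 ≤ t ∧ (t : EReal) < tstar} t)
    (hu0 : u 0 = 0) (hv0 : v 0 = c)
    (hmax : ¬ ∃ (S' : Set ℝ) (u' v' : ℝ → ℝ),
      {t : ℝ | 0 ≤ t ∧ (t : EReal) < tstar} ⊂ S' ∧
      (∀ t ∈ S', (0:ℝ) ≤ t) ∧ S'.OrdConnected ∧
      (∀ t ∈ S', HasDerivWithinAt u' (-3*(u' t)^2 - v' t) S' t ∧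
        HasDerivWithinAt v' (u' t) S' t) ∧
      (∀ t ∈ {t : ℝ | 0 ≤ t ∧ (t : EReal) < tstar}, u' t = u t ∧ v' t = v t)) :
    Filter.Tendsto u
      (Filter.comap (fun t : ℝ => (t : EReal)) (nhdsWithin tstar (Set.Iio tstar)))
      Filter.atBot ∧
    Filter.Tendsto v
      (Filter.comap (fun t : ℝ => (t : EReal)) (nhdsWithin tstar (Set.Iio tstar)))
      Filter.atBot := by
  set S := {t : ℝ | 0 ≤ t ∧ (t : EReal) < tstar} with hS_def
  have hsol : IsLayerSolution S u v := fun t ht => ⟨hu t ht, hv t ht⟩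
  have hS : Convex ℝ S := convex_setOf_le_coe_lt 0 tstar
  have h0 : (0 : ℝ) ∈ S := ⟨le_rfl, htpos⟩
  have hG_eq : ∀ t ∈ S, layerIntegral (u t) (v t) = layerIntegral 0 c := fun t ht => by
    rw [hsol.layerIntegral_eq hS h0 ht, hu0, hv0]
  have hG : ∀ t ∈ S, layerIntegral (u t) (v t) ≤ 0 := fun t ht =>
    (hG_eq t ht).trans_le (layerIntegral_zero_nonpos hc)
  have hu_le : ∀ t ∈ S, u t ≤ -(t / 6) := fun t ht => hsol.le_neg_div_six hS hG h0 hu0 ht ht.1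
  have hu_nonpos : ∀ t ∈ S, u t ≤ 0 := fun t ht => (hu_le t ht).trans (by linarith [ht.1])
  have hu_anti := hsol.antitoneOn_u hS hG
  have hv_anti := hsol.antitoneOn_v hS hu_nonpos
  suffices hu_unbdd : ¬ BddBelow (u '' S) from
    ⟨hu_anti.tendsto_atBot_comap_coe hu_unbdd, hv_anti.tendsto_atBot_comap_coe fun hv_bdd =>
      hu_unbdd (bddBelow_u_of_layerIntegral_eq (layerIntegral_zero_nonpos hc) hG_eq hv_bdd)⟩
  intro hu_bdd
  have hv_bdd := bddBelow_v_of_layerIntegral_nonpos hG hu_nonpos hu_bdd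
  induction tstar using EReal.rec with
  | bot => exact not_lt_bot htpos
  | top =>
    obtain ⟨M, hM⟩ := hu_bdd
    have hmem : 6 * (|M| + 1) ∈ S := ⟨by positivity, EReal.coe_lt_top _⟩
    have h1 : M ≤ u (6 * (|M| + 1)) := hM (mem_image_of_mem u hmem)
    have h2 := hu_le _ hmem
    linarith [neg_abs_le M]
  | coe T =>
    have hIco : S = Ico 0 T := by ext t; simp [hS_def]
    rw [hIco] at hsol hu_anti hv_anti hu_bdd hv_bdd hmax
    obtain ⟨U, V, hUV, hU, hV⟩ :=
      hsol.exists_extension_Icc (EReal.coe_pos.1 htpos) hu_anti hv_anti hu_bdd hv_bdd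
    exact hmax ⟨Icc 0 T, U, V, (ssubset_iff_of_subset Ico_subset_Icc_self).2
      ⟨T, right_mem_Icc.2 (EReal.coe_pos.1 htpos).le, right_notMem_Ico⟩,
      fun t ht => ht.1, ordConnected_Icc, hUV, fun t ht => ⟨hU ht, hV ht⟩⟩
end

section
/- Let α < β be real numbers, d > 0, b > 0, and let I, c : [α, β] → ℝ be continuous. Then there exists a twice continuously differentiable function u : [α, β] → ℝ satisfying d u''(x) + f(u(x)) − u(x)/b + c(x)/b + I(x) = 0 for all x ∈ [α, β], together with the Neumann boundary conditions u'(α) = 0 and u'(β) = 0. (Equivalently, the non-homogeneous FHN reaction–diffusion system has a stationary solution (u, v) with v = (u − c)/b.) -/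
/-!
Write the equation as `u'' = H(x, u)` with `H(x, u) = -(f(u) - u/b + c(x)/b + I(x)) / d`.
Since the cubic term dominates, for `M` large `H > 0` where `u ≥ M` and `H < 0` where `u ≤ -M`,
so by the maximum principle no Neumann solution reaches `±M`; this allows truncating `H`
outside `[-M, M]` to make it globally Lipschitz. Shooting: let `u_s` solve the truncated equation
with `u_s(α) = s`, `u_s'(α) = 0`. By continuous dependence on initial data `s ↦ u_s'(β)` is
continuous, and by the maximum principle again it is positive at `s = M` and negative at
`s = -M`, so it vanishes somewhere. A bump function turns that solution, defined on a
neighbourhood of `[α, β]`, into a global `C²` function.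
-/

open Set Filter Topology NNReal Metric

section MaxPrinciple

variable {y v : ℝ → ℝ}

theorem exists_gt_of_deriv_pos_right {a b w : ℝ} (hab : a < b)
    (hy : ∀ t ∈ Icc a b, HasDerivAt y (v t) t) (hv : HasDerivAt v w a) (hw : 0 < w)
    (hva : 0 ≤ v a) : ∃ t ∈ Ioc a b, y a < y t := by
  have hv_gt : ∀ᶠ t in 𝓝[>] a, v a < v t := by
    have hslope := (hasDerivAt_iff_tendsto_slope.1 hv).mono_left (nhdsGT_le_nhdsNE a)
    filter_upwards [hslope.eventually (eventually_gt_nhds hw), self_mem_nhdsWithin]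
      with t hslope (hat : a < t)
    rw [slope_def_field] at hslope
    exact sub_pos.1 ((div_pos_iff_of_pos_right (sub_pos.2 hat)).1 hslope)
  obtain ⟨u, hu, hsub⟩ := mem_nhdsGT_iff_exists_Ioc_subset.1 hv_gt
  have hat : a < min u b := lt_min hu hab
  have hIcc : Icc a (min u b) ⊆ Icc a b := Icc_subset_Icc_right (min_le_right _ _)
  have hmono : StrictMonoOn y (Icc a (min u b)) := by
    refine strictMonoOn_of_deriv_pos (convex_Icc _ _)
      (fun t ht => (hy t (hIcc ht)).continuousAt.continuousWithinAt) fun t ht => ?_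
    rw [interior_Icc] at ht
    rw [(hy t (hIcc (Ioo_subset_Icc_self ht))).deriv]
    exact hva.trans_lt (hsub ⟨ht.1, ht.2.le.trans (min_le_left _ _)⟩)
  exact ⟨min u b, ⟨hat, min_le_right _ _⟩,
    hmono (left_mem_Icc.2 hat.le) (right_mem_Icc.2 hat.le) hat⟩

theorem exists_gt_of_deriv_pos_left {a b w : ℝ} (hab : a < b)
    (hy : ∀ t ∈ Icc a b, HasDerivAt y (v t) t) (hv : HasDerivAt v w b) (hw : 0 < w)
    (hvb : v b ≤ 0) : ∃ t ∈ Ico a b, y b < y t := by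
  have hy' : ∀ t ∈ Icc (-b) (-a), HasDerivAt (fun t => y (-t)) (-v (-t)) t := fun t ht =>
    ((hy (-t) ⟨le_neg.1 ht.2, neg_le.1 ht.1⟩).comp t (hasDerivAt_neg t)).congr_deriv (by ring)
  have hv' : HasDerivAt (fun t => -v (-t)) w (-b) := by
    rw [← neg_neg b] at hv
    exact (hv.neg.comp (-b) (hasDerivAt_neg (-b))).congr_deriv (by ring)
  obtain ⟨t, ht, hlt⟩ :=
    exists_gt_of_deriv_pos_right (neg_lt_neg hab) hy' hv' hw (by simpa using hvb)
  exact ⟨-t, ⟨le_neg.1 ht.2, neg_lt.1 ht.1⟩, by simpa using hlt⟩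

variable {A B M : ℝ} {w : ℝ → ℝ}

theorem forall_lt_of_deriv_deriv_pos (hAB : A < B)
    (hy : ∀ t ∈ Icc A B, HasDerivAt y (v t) t) (hv : ∀ t ∈ Icc A B, HasDerivAt v (w t) t)
    (hw : ∀ t ∈ Icc A B, M ≤ y t → 0 < w t) (hA : 0 ≤ v A) (hB : v B ≤ 0) :
    ∀ t ∈ Icc A B, y t < M := by
  by_contra! ⟨t₀, ht₀, hMt₀⟩
  obtain ⟨x, hx, hmax⟩ := isCompact_Icc.exists_isMaxOn ⟨t₀, ht₀⟩
    fun t ht => (hy t ht).continuousAt.continuousWithinAt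
  have hwx := hw x hx (hMt₀.trans (hmax ht₀))
  rcases hx.2.lt_or_eq with hxB | rfl
  · have hvx : 0 ≤ v x := by
      rcases hx.1.eq_or_lt with rfl | hAx
      · exact hA
      · exact ((hmax.isLocalMax (Icc_mem_nhds hAx hxB)).hasDerivAt_eq_zero (hy x hx)).ge
    obtain ⟨t, ht, hlt⟩ := exists_gt_of_deriv_pos_right hxB
      (fun t ht => hy t ⟨hx.1.trans ht.1, ht.2⟩) (hv x hx) hwx hvx
    exact (hmax ⟨hx.1.trans ht.1.le, ht.2⟩).not_gt hlt
  · obtain ⟨t, ht, hlt⟩ := exists_gt_of_deriv_pos_left hAB hy (hv _ hx) hwx hB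
    exact (hmax (Ico_subset_Icc_self ht)).not_gt hlt

theorem forall_gt_of_deriv_deriv_neg (hAB : A < B)
    (hy : ∀ t ∈ Icc A B, HasDerivAt y (v t) t) (hv : ∀ t ∈ Icc A B, HasDerivAt v (w t) t)
    (hw : ∀ t ∈ Icc A B, y t ≤ M → w t < 0) (hA : v A ≤ 0) (hB : 0 ≤ v B) :
    ∀ t ∈ Icc A B, M < y t := fun t ht => by
  have := forall_lt_of_deriv_deriv_pos (y := -y) (v := -v) (w := -w) (M := -M) hAB
    (fun t ht => (hy t ht).neg) (fun t ht => (hv t ht).neg)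
    (fun t ht h => neg_pos.2 (hw t ht (neg_le_neg_iff.1 h))) (neg_nonneg.2 hA)
    (neg_nonpos.2 hB) t ht
  exact neg_lt_neg_iff.1 this

end MaxPrinciple

theorem exists_secondOrder_flow {tmin tmax : ℝ} (hT : tmin < tmax) (t₀ : Icc tmin tmax)
    (R : ℝ≥0) {H : ℝ → ℝ → ℝ} {C : ℝ} {K : ℝ≥0}
    (hcont : ∀ z, ContinuousOn (H · z) (Icc tmin tmax))
    (hbdd : ∀ t ∈ Icc tmin tmax, ∀ z, |H t z| ≤ C)
    (hlip : ∀ t ∈ Icc tmin tmax, LipschitzWith K (H t)) :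
    ∃ y v : ℝ → ℝ → ℝ, (∀ s ∈ Icc (-(R : ℝ)) R, y s t₀ = s ∧ v s t₀ = 0 ∧
      ∀ t ∈ Icc tmin tmax, HasDerivWithinAt (y s) (v s t) (Icc tmin tmax) t ∧
        HasDerivWithinAt (v s) (H t (y s t)) (Icc tmin tmax) t) ∧
      ∀ t ∈ Icc tmin tmax, ContinuousOn (v · t) (Icc (-(R : ℝ)) R) := by
  set μ := 2 * (tmax - tmin)
  have hμ0 : 0 < μ := by linarith
  have hC : 0 ≤ C := (abs_nonneg _).trans (hbdd tmin (left_mem_Icc.2 hT.le) 0)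
  set a : ℝ := 2 * R + μ ^ 2 * C / 2 with ha
  have ha0 : 0 ≤ a := by positivity
  -- Rescaling the velocity by `μ` is what bounds the field on a ball large enough for the whole
  -- time interval.
  have hPL : IsPicardLindelof (fun t p => (μ⁻¹ • p.2, μ • H t p.1)) t₀ (0 : ℝ × ℝ) a.toNNReal R
      (max (a / μ) (μ * C)).toNNReal (max (‖μ⁻¹‖₊ * 1) (‖μ‖₊ * (K * 1))) := by
    refine ⟨fun t ht => ?_, fun p _ => ?_, fun t ht p hp => ?_, ?_⟩
    · exact (((lipschitzWith_smul μ⁻¹).comp LipschitzWith.prod_snd).prodMk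
        ((lipschitzWith_smul μ).comp ((hlip t ht).comp LipschitzWith.prod_fst))).lipschitzOnWith
    · exact continuousOn_const.prodMk ((hcont p.1).const_smul μ)
    · rw [mem_closedBall_zero_iff, Real.coe_toNNReal _ ha0] at hp
      rw [Real.coe_toNNReal _ (le_max_of_le_right (by positivity)), Prod.norm_def]
      refine max_le_max ?_ ?_
      · rw [norm_smul, norm_inv, Real.norm_of_nonneg hμ0.le, inv_mul_le_iff₀ hμ0,
          mul_div_cancel₀ _ hμ0.ne']
        exact (norm_snd_le p).trans hp
      · rw [norm_smul, Real.norm_of_nonneg hμ0.le, Real.norm_eq_abs]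
        exact mul_le_mul_of_nonneg_left (hbdd t ht _) hμ0.le
    · rw [Real.coe_toNNReal _ ha0, Real.coe_toNNReal _ (le_max_of_le_right (by positivity))]
      have hmax : max (tmax - t₀) (t₀ - tmin) ≤ μ / 2 :=
        max_le (by linarith [t₀.2.1]) (by linarith [t₀.2.2])
      have hμC : 0 ≤ μ ^ 2 * C := by positivity
      calc max (a / μ) (μ * C) * max (tmax - t₀) (t₀ - tmin)
          ≤ max (a / μ) (μ * C) * (μ / 2) :=
            mul_le_mul_of_nonneg_left hmax (le_max_of_le_right (by positivity))
        _ = max (a / 2) (μ ^ 2 * C / 2) := by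
            rw [max_mul_of_nonneg _ _ (by positivity)]
            congr 1 <;> field_simp
        _ ≤ a - R := max_le (by linarith) (by linarith [R.coe_nonneg])
  obtain ⟨α, hα, L, hL⟩ :=
    hPL.exists_forall_mem_closedBall_eq_hasDerivWithinAt_lipschitzOnWith
  have hball : ∀ s ∈ Icc (-(R : ℝ)) R, ((s, 0) : ℝ × ℝ) ∈ closedBall 0 R := fun s hs => by
    simpa [Prod.norm_def, abs_le] using hs
  refine ⟨fun s t => (α (s, 0) t).1, fun s t => μ⁻¹ * (α (s, 0) t).2, fun s hs => ?_,
    fun t ht => ?_⟩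
  · obtain ⟨h0, hD⟩ := hα _ (hball s hs)
    refine ⟨by simp [h0], by simp [h0], fun t ht => ⟨?_, ?_⟩⟩
    · exact (hasFDerivAt_fst.comp_hasDerivWithinAt t (hD t ht) :)
    · simpa [inv_mul_cancel_left₀ hμ0.ne'] using
        (hasFDerivAt_snd.comp_hasDerivWithinAt t (hD t ht)).const_mul μ⁻¹
  · exact continuousOn_const.mul <| continuous_snd.comp_continuousOn <|
      (hL t ht).continuousOn.comp (Continuous.continuousOn (by fun_prop)) hball

theorem contDiffOn_two_of_hasDerivAt {E : Type*} [NormedAddCommGroup E] [NormedSpace ℝ E]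
    {U : Set ℝ} (hU : IsOpen U) {y v w : ℝ → E}
    (hy : ∀ t ∈ U, HasDerivAt y (v t) t) (hv : ∀ t ∈ U, HasDerivAt v (w t) t)
    (hw : ContinuousOn w U) : ContDiffOn ℝ 2 y U := by
  have hv1 : ContDiffOn ℝ 1 v U := by
    rw [show (1 : WithTop ℕ∞) = 0 + 1 from rfl, contDiffOn_succ_iff_deriv_of_isOpen hU]
    refine ⟨fun t ht => (hv t ht).differentiableAt.differentiableWithinAt, by simp, ?_⟩
    exact contDiffOn_zero.2 (hw.congr fun t ht => (hv t ht).deriv)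
  rw [show (2 : WithTop ℕ∞) = 1 + 1 from rfl, contDiffOn_succ_iff_deriv_of_isOpen hU]
  exact ⟨fun t ht => (hy t ht).differentiableAt.differentiableWithinAt, by simp,
    hv1.congr fun t ht => (hy t ht).deriv⟩

theorem exists_contDiff_eventuallyEq {E : Type*} [NormedAddCommGroup E] [NormedSpace ℝ E]
    {n : ℕ∞} {f : ℝ → E} {a b ε : ℝ} (hab : a ≤ b) (hε : 0 < ε)
    (hf : ContDiffOn ℝ n f (Ioo (a - ε) (b + ε))) :
    ∃ g : ℝ → E, ContDiff ℝ n g ∧ ∀ x ∈ Icc a b, g =ᶠ[𝓝 x] f := by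
  let φ : ContDiffBump ((a + b) / 2) :=
    ⟨(b - a) / 2 + ε / 3, (b - a) / 2 + 2 * ε / 3, by linarith, by linarith⟩
  refine ⟨fun x => φ x • f x, contDiff_iff_contDiffAt.2 fun x => ?_, fun x hx => ?_⟩
  · by_cases hx : x ∈ Ioo (a - ε) (b + ε)
    · exact φ.contDiffAt.smul (hf.contDiffAt (Ioo_mem_nhds hx.1 hx.2))
    · have hφ : x ∉ tsupport φ := by
        rw [φ.tsupport_eq, Real.closedBall_eq_Icc,
          show φ.rOut = (b - a) / 2 + 2 * ε / 3 from rfl]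
        exact fun h => hx ⟨by linarith [h.1], by linarith [h.2]⟩
      exact (contDiffAt_const (c := (0 : E))).congr_of_eventuallyEq
        ((notMem_tsupport_iff_eventuallyEq.1 hφ).mono fun y hy =>
          by simp [show φ y = 0 from hy])
  · filter_upwards [Ioo_mem_nhds (show a - ε / 3 < x by linarith [hx.1])
      (show x < b + ε / 3 by linarith [hx.2])] with y hy
    rw [φ.one_of_mem_closedBall, one_smul]
    rw [Real.closedBall_eq_Icc, show φ.rIn = (b - a) / 2 + ε / 3 from rfl]
    exact ⟨by linarith [hy.1], by linarith [hy.2]⟩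

theorem exists_shooting_solution {A B M : ℝ} (hAB : A < B) {H : ℝ → ℝ → ℝ}
    (hH : ∀ z, Continuous (H · z)) {C : ℝ} {K : ℝ≥0}
    (hbdd : ∀ t z, |H t z| ≤ C) (hlip : ∀ t, LipschitzWith K (H t))
    (hpos : ∀ t ∈ Icc A B, ∀ z, M ≤ z → 0 < H t z)
    (hneg : ∀ t ∈ Icc A B, ∀ z, z ≤ -M → H t z < 0) :
    ∃ y v : ℝ → ℝ, (∀ t ∈ Ioo (A - 1) (B + 1), HasDerivAt y (v t) t ∧
      HasDerivAt v (H t (y t)) t) ∧ v A = 0 ∧ v B = 0 := by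
  have hA : A ∈ Icc A B := left_mem_Icc.2 hAB.le
  have hM : 0 ≤ M := by
    by_contra! hM
    linarith [hpos A hA 0 (by linarith), hneg A hA 0 (by linarith)]
  obtain ⟨y, v, hsol, hcont⟩ := exists_secondOrder_flow (tmin := A - 1) (tmax := B + 1)
    (by linarith) ⟨A, by constructor <;> linarith⟩ M.toNNReal
    (fun z => (hH z).continuousOn) (fun t _ => hbdd t) (fun t _ => hlip t)
  rw [Real.coe_toNNReal _ hM] at hsol hcont
  have hderiv : ∀ s ∈ Icc (-M) M, ∀ t ∈ Ioo (A - 1) (B + 1),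
      HasDerivAt (y s) (v s t) t ∧ HasDerivAt (v s) (H t (y s t)) t := fun s hs t ht =>
    have hnhds := Icc_mem_nhds ht.1 ht.2
    ⟨((hsol s hs).2.2 t (Ioo_subset_Icc_self ht)).1.hasDerivAt hnhds,
      ((hsol s hs).2.2 t (Ioo_subset_Icc_self ht)).2.hasDerivAt hnhds⟩
  have hIcc : Icc A B ⊆ Ioo (A - 1) (B + 1) := Icc_subset_Ioo (by linarith) (by linarith)
  have hM_mem : M ∈ Icc (-M) M := right_mem_Icc.2 (by linarith)
  have hnegM_mem : -M ∈ Icc (-M) M := left_mem_Icc.2 (by linarith)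
  -- If the shot from height `M` ended with `v ≤ 0` at `B`, the maximum principle would force
  -- the height at `A` below `M`; symmetrically for `-M`.
  have hvM : 0 < v M B := by
    by_contra! h
    have := forall_lt_of_deriv_deriv_pos hAB (fun t ht => (hderiv M hM_mem t (hIcc ht)).1)
      (fun t ht => (hderiv M hM_mem t (hIcc ht)).2) (fun t ht => hpos t ht _)
      (hsol M hM_mem).2.1.ge h A hA
    exact this.ne (hsol M hM_mem).1
  have hvnegM : v (-M) B < 0 := by
    by_contra! h
    have := forall_gt_of_deriv_deriv_neg hAB
      (fun t ht => (hderiv (-M) hnegM_mem t (hIcc ht)).1)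
      (fun t ht => (hderiv (-M) hnegM_mem t (hIcc ht)).2) (fun t ht => hneg t ht _)
      (hsol (-M) hnegM_mem).2.1.le h A hA
    exact this.ne' (hsol (-M) hnegM_mem).1
  obtain ⟨s, hs, hvsB⟩ := intermediate_value_Icc (by linarith)
    (hcont B (Ioo_subset_Icc_self (hIcc (right_mem_Icc.2 hAB.le)))) ⟨hvnegM.le, hvM.le⟩
  exact ⟨y s, v s, hderiv s hs, (hsol s hs).2.1, hvsB⟩

theorem exists_neumann_solution {A B M : ℝ} (hAB : A < B) {H : ℝ → ℝ → ℝ}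
    (hH : Continuous (Function.uncurry H)) {C : ℝ} {K : ℝ≥0}
    (hbdd : ∀ t z, |H t z| ≤ C) (hlip : ∀ t, LipschitzWith K (H t))
    (hpos : ∀ t ∈ Icc A B, ∀ z, M ≤ z → 0 < H t z)
    (hneg : ∀ t ∈ Icc A B, ∀ z, z ≤ -M → H t z < 0) :
    ∃ u : ℝ → ℝ, ContDiff ℝ 2 u ∧ (∀ t ∈ Icc A B, deriv (deriv u) t = H t (u t) ∧ |u t| < M) ∧
      deriv u A = 0 ∧ deriv u B = 0 := by
  obtain ⟨y, v, hderiv, hvA, hvB⟩ := exists_shooting_solution hAB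
    (fun z => hH.comp (continuous_id.prodMk continuous_const)) hbdd hlip hpos hneg
  have hIcc : Icc A B ⊆ Ioo (A - 1) (B + 1) := Icc_subset_Ioo (by linarith) (by linarith)
  have hy : ∀ t ∈ Icc A B, HasDerivAt y (v t) t := fun t ht => (hderiv t (hIcc ht)).1
  have hv : ∀ t ∈ Icc A B, HasDerivAt v (H t (y t)) t := fun t ht => (hderiv t (hIcc ht)).2
  have hbound : ∀ t ∈ Icc A B, |y t| < M := fun t ht => abs_lt.2
    ⟨forall_gt_of_deriv_deriv_neg hAB hy hv (fun t ht => hneg t ht _) hvA.le hvB.ge t ht,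
      forall_lt_of_deriv_deriv_pos hAB hy hv (fun t ht => hpos t ht _) hvA.ge hvB.le t ht⟩
  obtain ⟨u, hu, huy⟩ := exists_contDiff_eventuallyEq (n := 2) hAB.le one_pos
    (contDiffOn_two_of_hasDerivAt isOpen_Ioo (fun t ht => (hderiv t ht).1)
      (fun t ht => (hderiv t ht).2) (hH.comp_continuousOn (continuousOn_id.prodMk
        fun t ht => (hderiv t ht).1.continuousAt.continuousWithinAt)))
  have hu' : ∀ t ∈ Icc A B, deriv u =ᶠ[𝓝 t] v := fun t ht => by
    filter_upwards [(huy t ht).deriv, Ioo_mem_nhds (hIcc ht).1 (hIcc ht).2] with τ hτ hτ'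
    exact hτ.trans (hderiv τ hτ').1.deriv
  refine ⟨u, hu, fun t ht => ?_, ?_, ?_⟩
  · rw [(hu' t ht).deriv_eq, (hv t ht).deriv, (huy t ht).eq_of_nhds]
    exact ⟨rfl, hbound t ht⟩
  · rw [(hu' A (left_mem_Icc.2 hAB.le)).eq_of_nhds, hvA]
  · rw [(hu' B (right_mem_Icc.2 hAB.le)).eq_of_nhds, hvB]

theorem exists_neumann_solution_of_coercive {A B d M : ℝ} (hAB : A < B) (hd : 0 < d)
    (hM : 0 ≤ M) {F g : ℝ → ℝ} (hF : LocallyLipschitz F) (hg : ContinuousOn g (Icc A B))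
    (hFM : ∀ x ∈ Icc A B, F M + g x < 0) (hF_negM : ∀ x ∈ Icc A B, 0 < F (-M) + g x) :
    ∃ u : ℝ → ℝ, ContDiff ℝ 2 u ∧ (∀ x ∈ Icc A B, d * deriv (deriv u) x + F (u x) + g x = 0) ∧
      deriv u A = 0 ∧ deriv u B = 0 := by
  have hMM : -M ≤ M := by linarith
  -- Freezing `F` outside `[-M, M]` and `g` outside `[A, B]` makes the equation globally
  -- Lipschitz and bounded without changing it where the solution lives.
  set Fc := IccExtend hMM ((Icc (-M) M).domRestrict F)
  set gc := IccExtend hAB.le ((Icc A B).domRestrict g)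
  obtain ⟨K, hK⟩ := (hF.locallyLipschitzOn (s := Icc (-M) M)).exists_lipschitzOnWith_of_compact
    isCompact_Icc
  obtain ⟨C₁, hC₁⟩ := isCompact_Icc.exists_bound_of_continuousOn hF.continuous.continuousOn
    (s := Icc (-M) M)
  obtain ⟨C₂, hC₂⟩ := isCompact_Icc.exists_bound_of_continuousOn hg
  have hFc : Continuous Fc := hF.continuous.continuousOn.domRestrict.Icc_extend'
  have hgc : Continuous gc := hg.domRestrict.Icc_extend'
  have hgc_eq : ∀ t ∈ Icc A B, gc t = g t := fun t ht => IccExtend_of_mem _ _ ht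
  obtain ⟨u, hu, hsol, hA, hB⟩ := exists_neumann_solution hAB (M := M)
    (H := fun t z => -d⁻¹ * (Fc z + gc t)) (C := d⁻¹ * (C₁ + C₂))
    (continuous_const.mul ((hFc.comp continuous_snd).add (hgc.comp continuous_fst)))
    (fun t z => by
      rw [abs_mul, abs_neg, abs_inv, abs_of_pos hd]
      exact mul_le_mul_of_nonneg_left ((abs_add_le _ _).trans (add_le_add
        (hC₁ _ (projIcc _ _ hMM z).2) (hC₂ _ (projIcc _ _ hAB.le t).2))) (by positivity))
    (fun t => (lipschitzWith_smul (-d⁻¹)).comp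
      ((hK.to_restrict.comp (LipschitzWith.projIcc hMM)).add (LipschitzWith.const (gc t))))
    (fun t ht z hz => by
      rw [show Fc z = F M from IccExtend_of_right_le hMM _ hz, hgc_eq t ht]
      exact mul_pos_of_neg_of_neg (by simpa using hd) (hFM t ht))
    (fun t ht z hz => by
      rw [show Fc z = F (-M) from IccExtend_of_le_left hMM _ hz, hgc_eq t ht]
      exact mul_neg_of_neg_of_pos (by simpa using hd) (hF_negM t ht))
  refine ⟨u, hu, fun x hx => ?_, hA, hB⟩
  obtain ⟨hu2, hux⟩ := hsol x hx
  rw [hu2, show Fc (u x) = F (u x) from IccExtend_of_mem hMM _ (abs_le.1 hux.le),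
    hgc_eq x hx]
  field_simp
  ring

/-- Let `α < β`, `d > 0`, `b > 0`, and let `I, c : [α, β] → ℝ` be continuous.
Then the stationary equation of the non-homogeneous FHN reaction-diffusion system
(with `f(u) = -u³ + 3u`, after eliminating `v = (u - c)/b`) admits a twice
continuously differentiable solution `u` with Neumann boundary conditions:
`d u'' + f(u) - u/b + c(x)/b + I(x) = 0` on `[α, β]`, `u'(α) = u'(β) = 0`. -/
theorem stmt_14 (α β d b : ℝ) (hab : α < β) (hd : 0 < d) (hb : 0 < b)
    (I c : ℝ → ℝ) (hI : ContinuousOn I (Set.Icc α β))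
    (hc : ContinuousOn c (Set.Icc α β)) :
    ∃ u : ℝ → ℝ, ContDiff ℝ 2 u ∧
      (∀ x ∈ Set.Icc α β,
        d * deriv (deriv u) x + (-(u x)^3 + 3*(u x)) - u x / b + c x / b + I x = 0) ∧
      deriv u α = 0 ∧ deriv u β = 0 := by
  have hg : ContinuousOn (fun x => c x / b + I x) (Icc α β) := (hc.div_const b).add hI
  obtain ⟨Γ, hΓ⟩ := isCompact_Icc.exists_bound_of_continuousOn hg
  set M := |Γ| + 3
  have hM3 : 3 ≤ M := by simp [M, abs_nonneg]
  have hM : 6 * M ≤ M ^ 3 - 3 * M := by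
    nlinarith [mul_nonneg (by linarith : (0 : ℝ) ≤ M) (by nlinarith : (0 : ℝ) ≤ M ^ 2 - 9)]
  have hMb : 0 < M / b := by positivity
  have hgM : ∀ x ∈ Icc α β, |c x / b + I x| < M := fun x hx =>
    ((hΓ x hx).trans (le_abs_self Γ)).trans_lt (by linarith)
  obtain ⟨u, hu, hsol, hα, hβ⟩ := exists_neumann_solution_of_coercive hab hd
    (by positivity : 0 ≤ M) (F := fun z => -z ^ 3 + 3 * z - z / b)
    (ContDiff.locallyLipschitz (𝕂 := ℝ) (by fun_prop)) hg
    (fun x hx => by linarith [abs_lt.1 (hgM x hx)])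
    (fun x hx => by
      have := abs_lt.1 (hgM x hx)
      simp only [neg_div]; nlinarith)
  exact ⟨u, hu, fun x hx => by linarith [hsol x hx], hα, hβ⟩
end

section
/- Let α < β, d > 0, b > 0, and let I : [α, β] → ℝ be continuous. There exists a constant C > 0 (depending only on α, β, d, b and I) such that for every t ∈ [0, 1] and every twice continuously differentiable u : [α, β] → ℝ with u'(α) = u'(β) = 0 satisfying −d u''(x) + u(x)/b = t(−u(x)³ + 3u(x) + I(x)) for all x ∈ [α, β], one has ∫_α^β u(x)² dx ≤ C and ∫_α^β u'(x)² dx ≤ C. -/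
/-!
Multiplying the equation by `u` and integrating by parts (the Neumann conditions kill the
boundary terms) gives `d ∫ u'² + (1/b) ∫ u² = t ∫ (-u⁴ + 3u² + I u)`. The quartic term
dominates, so the integrand on the right is bounded above by a constant depending only on
`sup |I|`, which bounds both integrals on the left.
-/

open intervalIntegral

section Neumann

variable {u : ℝ → ℝ} {a b : ℝ}

theorem integral_deriv_deriv_mul_eq_neg_integral_sq_of_neumann (hu : ContDiff ℝ 2 u)
    (ha : deriv u a = 0) (hb : deriv u b = 0) :
    ∫ x in a..b, deriv (deriv u) x * u x = -∫ x in a..b, deriv u x ^ 2 := by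
  have hu' : ContDiff ℝ 1 (deriv u) := hu.deriv'
  have hu'c : Continuous (deriv u) := hu'.continuous
  have hu'' : Continuous (deriv (deriv u)) := hu'.continuous_deriv le_rfl
  have ibp := integral_deriv_mul_eq_sub
    (fun x _ => (hu'.differentiable one_ne_zero x).hasDerivAt)
    (fun x _ => (hu.differentiable two_ne_zero x).hasDerivAt)
    (hu''.intervalIntegrable a b) (hu'c.intervalIntegrable a b)
  rw [ha, hb, integral_add ((by fun_prop : Continuous _).intervalIntegrable a b)
    ((by fun_prop : Continuous _).intervalIntegrable a b)] at ibp
  simp only [← sq, zero_mul, sub_self] at ibp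
  linarith

theorem integral_mul_self_eq_energy_of_neumann (hu : ContDiff ℝ 2 u) (ha : deriv u a = 0)
    (hb : deriv u b = 0) (d c : ℝ) :
    ∫ x in a..b, (-d * deriv (deriv u) x + u x / c) * u x
      = d * (∫ x in a..b, deriv u x ^ 2) + (∫ x in a..b, u x ^ 2) / c := by
  have hu'' : Continuous (deriv (deriv u)) := hu.deriv'.continuous_deriv le_rfl
  have hsplit : (fun x => (-d * deriv (deriv u) x + u x / c) * u x)
      = fun x => -d * (deriv (deriv u) x * u x) + u x ^ 2 / c := by
    ext x; ring
  rw [hsplit, integral_add ((by fun_prop : Continuous _).intervalIntegrable a b)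
    ((by fun_prop : Continuous _).intervalIntegrable a b), integral_const_mul,
    integral_div, integral_deriv_deriv_mul_eq_neg_integral_sq_of_neumann hu ha hb]
  ring

end Neumann

theorem mul_fhn_source_mul_le {M c t : ℝ} (hc : |c| ≤ M) (ht : t ∈ Set.Icc (0 : ℝ) 1) (v : ℝ) :
    t * ((-v ^ 3 + 3 * v + c) * v) ≤ 49 / 16 + M ^ 2 / 2 := by
  have hc2 : c ^ 2 ≤ M ^ 2 := sq_le_sq' (abs_le.mp hc).1 (abs_le.mp hc).2
  -- `-v⁴ + 3v² + cv = 49/16 + c²/2 - (v² - 7/4)² - (v - c)²/2`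
  have hsource : (-v ^ 3 + 3 * v + c) * v ≤ 49 / 16 + M ^ 2 / 2 := by
    nlinarith [sq_nonneg (v ^ 2 - 7 / 4), sq_nonneg (v - c)]
  calc t * ((-v ^ 3 + 3 * v + c) * v) ≤ t * (49 / 16 + M ^ 2 / 2) :=
        mul_le_mul_of_nonneg_left hsource ht.1
    _ ≤ 49 / 16 + M ^ 2 / 2 := mul_le_of_le_one_left (by positivity) ht.2

theorem le_mul_and_le_div_of_mul_add_div_le {A B c d E : ℝ} (hA : 0 ≤ A) (hB : 0 ≤ B)
    (hc : 0 < c) (hd : 0 < d) (h : d * A + B / c ≤ E) : B ≤ c * E ∧ A ≤ E / d := by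
  have hBc : 0 ≤ B / c := div_nonneg hB hc.le
  constructor
  · rw [← div_le_iff₀' hc]; nlinarith
  · rw [le_div_iff₀' hd]; linarith

/-- A priori bound for the Leray–Schauder homotopy: for `α < β`, `d > 0`, `b > 0`
and continuous `I`, there is `C > 0` such that every `t ∈ [0,1]` and every `C²`
Neumann solution `u` of `-d u'' + u/b = t(-u³ + 3u + I(x))` on `[α, β]` satisfies
`∫ u² ≤ C` and `∫ u'² ≤ C`. -/
theorem stmt_15 (α β d b : ℝ) (hab : α < β) (hd : 0 < d) (hb : 0 < b)
    (I : ℝ → ℝ) (hI : ContinuousOn I (Set.Icc α β)) :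
    ∃ C > (0:ℝ), ∀ t ∈ Set.Icc (0:ℝ) 1, ∀ u : ℝ → ℝ, ContDiff ℝ 2 u →
      deriv u α = 0 → deriv u β = 0 →
      (∀ x ∈ Set.Icc α β,
        -d * deriv (deriv u) x + u x / b = t * (-(u x)^3 + 3*(u x) + I x)) →
      (∫ x in α..β, (u x)^2) ≤ C ∧ (∫ x in α..β, (deriv u x)^2) ≤ C := by
  obtain ⟨M, hM⟩ := isCompact_Icc.exists_bound_of_continuousOn hI
  set K := 49 / 16 + M ^ 2 / 2
  have hE : 0 ≤ (β - α) * K := mul_nonneg (sub_pos.mpr hab).le (by positivity)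
  refine ⟨b * ((β - α) * K) + (β - α) * K / d + 1, by positivity, ?_⟩
  rintro t ht u hu hα hβ hsol
  have hu'' : Continuous (deriv (deriv u)) := hu.deriv'.continuous_deriv le_rfl
  have henergy : d * (∫ x in α..β, deriv u x ^ 2) + (∫ x in α..β, u x ^ 2) / b
      ≤ (β - α) * K := by
    rw [← integral_mul_self_eq_energy_of_neumann hu hα hβ, ← smul_eq_mul, ← integral_const]
    refine integral_mono_on hab.le ((by fun_prop : Continuous _).intervalIntegrable α β)
      intervalIntegrable_const fun x hx => ?_
    rw [hsol x hx, mul_assoc]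
    exact mul_fhn_source_mul_le (hM x hx) ht (u x)
  obtain ⟨hL2, hH1⟩ := le_mul_and_le_div_of_mul_add_div_le
    (integral_nonneg hab.le fun x _ => sq_nonneg (deriv u x))
    (integral_nonneg hab.le fun x _ => sq_nonneg (u x)) hb hd henergy
  have hb' : 0 ≤ b * ((β - α) * K) := mul_nonneg hb.le hE
  have hd' : 0 ≤ (β - α) * K / d := div_nonneg hE hd.le
  exact ⟨by linarith, by linarith⟩
end

section
/- Let b > 0 and λ < 0. Then there exists ε₀ > 0 such that for all ε ∈ (0, ε₀): (λ − bε)² − 4ε > 0, and the eigenvalue μ₂ = (1/(2ε))(−λ − bε + √((λ − bε)² − 4ε)) of the matrix A = [[−λ/ε, −1/ε], [1, −b]] is real and strictly positive. In particular, if the first Sturm–Liouville eigenvalue λ₀ is negative, then for ε small enough the linearized system (E_0) has a positive real eigenvalue, so the stationary solution is linearly unstable. -/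
/-!
Up to the factor `1/ε`, the characteristic polynomial of `A` at `μ` is
`ε μ² + (λ + bε) μ + (λb + 1)`, whose discriminant is `(λ - bε)² - 4ε`, so `μ₂` is its
larger root. For `ε < λ²/4` and `bε < -λ` the discriminant exceeds `λ² - 4ε > 0`, and
`μ₂ ≥ (-λ - bε)/(2ε) > 0`.
-/

theorem Matrix.det_fin_two_of_sub_smul_one {R : Type*} [CommRing R] (a b c d μ : R) :
    (!![a, b; c, d] - μ • 1).det = μ * μ - (a + d) * μ + (a * d - b * c) := by
  simp only [Matrix.det_fin_two, Matrix.sub_apply, Matrix.smul_apply, Matrix.one_apply_eq,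
    Matrix.one_apply_ne zero_ne_one, Matrix.one_apply_ne one_ne_zero, Matrix.of_apply,
    Matrix.cons_val', Matrix.cons_val_zero, Matrix.cons_val_one, Matrix.cons_val_fin_one,
    smul_eq_mul]
  ring

theorem det_fhn_sub_smul_one (lam b : ℝ) {ε : ℝ} (hε : ε ≠ 0) (μ : ℝ) :
    (!![-lam/ε, -1/ε; 1, -b] - μ • 1).det
      = (ε * μ * μ + (lam + b*ε) * μ + (lam*b + 1)) / ε := by
  rw [Matrix.det_fin_two_of_sub_smul_one]
  field_simp
  ring

theorem discrim_fhn (lam b ε : ℝ) :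
    discrim ε (lam + b*ε) (lam*b + 1) = (lam - b*ε)^2 - 4*ε := by
  unfold discrim
  ring

theorem det_fhn_sub_smul_one_eq_zero (lam b : ℝ) {ε : ℝ} (hε : ε ≠ 0)
    (hD : 0 ≤ (lam - b*ε)^2 - 4*ε) :
    (!![-lam/ε, -1/ε; 1, -b] - ((1/(2*ε)) * (-lam - b*ε + √((lam - b*ε)^2 - 4*ε))) • 1).det
      = 0 := by
  set s := √((lam - b*ε)^2 - 4*ε)
  have hs : discrim ε (lam + b*ε) (lam*b + 1) = s * s := by
    rw [discrim_fhn, Real.mul_self_sqrt hD]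
  have hroot := (quadratic_eq_zero_iff hε hs ((-(lam + b*ε) + s) / (2*ε))).2 (Or.inl rfl)
  rw [det_fhn_sub_smul_one lam b hε, div_eq_zero_iff]
  left
  convert hroot using 3 <;> ring

/-- Let `b > 0` and `λ < 0`.  There exists `ε₀ > 0` such that for all `ε ∈ (0, ε₀)`:
`(λ - bε)² - 4ε > 0`, and `μ₂ = (1/(2ε))(-λ - bε + √((λ - bε)² - 4ε))` is real,
strictly positive, and an eigenvalue of `A = [[-λ/ε, -1/ε], [1, -b]]`.  In
particular, if the first Sturm–Liouville eigenvalue `λ₀` is negative, the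
linearized system `(E_0)` has a positive real eigenvalue for small `ε`, so the
stationary solution is linearly unstable. -/
theorem stmt_19 (b lam : ℝ) (hb : 0 < b) (hlam : lam < 0) :
    ∃ ε₀ > (0:ℝ), ∀ ε ∈ Set.Ioo (0:ℝ) ε₀,
      0 < (lam - b*ε)^2 - 4*ε ∧
      0 < (1/(2*ε)) * (-lam - b*ε + Real.sqrt ((lam - b*ε)^2 - 4*ε)) ∧
      ((!![-lam/ε, -1/ε; 1, -b] : Matrix (Fin 2) (Fin 2) ℝ)
        - ((1/(2*ε)) * (-lam - b*ε + Real.sqrt ((lam - b*ε)^2 - 4*ε))) • 1).det = 0 := by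
  refine ⟨min (lam^2/4) (-lam/b), lt_min (by nlinarith) (div_pos (neg_pos.2 hlam) hb), ?_⟩
  rintro ε ⟨hε, hεε₀⟩
  have hε_lt_sq : 4*ε < lam^2 := by linarith [hεε₀.trans_le (min_le_left _ _)]
  have hbε : b*ε < -lam := by
    linarith [(lt_div_iff₀ hb).1 (hεε₀.trans_le (min_le_right _ _))]
  have hD : 0 < (lam - b*ε)^2 - 4*ε := by
    have : lam^2 ≤ (lam - b*ε)^2 := by nlinarith [mul_pos hb hε]
    linarith
  refine ⟨hD, mul_pos (by positivity) ?_, det_fhn_sub_smul_one_eq_zero lam b hε.ne' hD.le⟩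
  linarith [Real.sqrt_nonneg ((lam - b*ε)^2 - 4*ε)]
end
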